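/- Let {X_{k,n} : k,n ≥ 1} be a double array of independent random variables, let g : [0,∞) → (0,∞) be non-decreasing, let κ be a positive increasing function on (0,∞), and suppose there exists C > 0 such that for every k,n ≥ 1 and all x > 0, P(X_{k,n}/g(ln(kn)) < x) ≤ exp(−C e^{−κ(x)}). Let a_{m,j} = g(ln(mj)) ψ^{−1}(ln(mj)) and Y⁻_{m,j} = max(a_{m,j} − max_{1 ≤ k ≤ m, 1 ≤ n ≤ j} X_{k,n}, 0). Then for every ε > 0 and all m,j ≥ 1 such that (g(ln(mj))/g(0)) ψ^{−1}(ln(mj)) − ε/g(ln(mj)) > 0, it holds that P(Y⁻_{m,j} > ε) ≤ exp(−C m j exp(−κ((g(ln(mj))/g(0)) ψ^{−1}(ln(mj)) − ε/g(ln(mj))))). -/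

import Mathlib

open MeasureTheory Real Filter Set

/-- An Orlicz N-function: continuous, even, convex, vanishing at `0`, monotone
increasing on `[0, ∞)`, with `φ x / x → 0` as `x → 0⁺` and `φ x / x → ∞` as `x → ∞`. -/
structure IsOrliczN (φ : ℝ → ℝ) : Prop where
  continuous : Continuous φ
  even : ∀ x, φ (-x) = φ x
  convexOn : ConvexOn ℝ Set.univ φ
  map_zero : φ 0 = 0
  strictMonoOn : StrictMonoOn φ (Set.Ici 0)
  tendsto_zero : Tendsto (fun x => φ x / x) (nhdsWithin 0 (Set.Ioi 0)) (nhds 0)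
  tendsto_atTop : Tendsto (fun x => φ x / x) atTop atTop

/-- `ψ` is the Young–Fenchel transform of `φ`: `ψ x = sup_{y ∈ ℝ} (x * y - φ y)`. -/
def IsYoungFenchel (φ ψ : ℝ → ℝ) : Prop :=
  ∀ x, IsLUB {z | ∃ y, z = x * y - φ y} (ψ x)

/-- The moment generating function bound `E exp(t X) ≤ exp (φ (a t))` with constant `a > 0`. -/
def PhiMGF (φ : ℝ → ℝ) {Ω : Type*} [MeasurableSpace Ω] (P : Measure Ω) (X : Ω → ℝ)
    (a : ℝ) : Prop :=
  0 < a ∧ ∀ t : ℝ, Integrable (fun ω => Real.exp (t * X ω)) P ∧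
    ∫ ω, Real.exp (t * X ω) ∂P ≤ Real.exp (φ (a * t))

/-- `X` is a `φ`-subgaussian random variable: centered, with an MGF bound. -/
def IsPhiSubGaussian (φ : ℝ → ℝ) {Ω : Type*} [MeasurableSpace Ω] (P : Measure Ω)
    (X : Ω → ℝ) : Prop :=
  Integrable X P ∧ (∫ ω, X ω ∂P) = 0 ∧ ∃ a, PhiMGF φ P X a

/-- The `φ`-subgaussian norm `τ_φ(X)`. -/
noncomputable def tauPhi (φ : ℝ → ℝ) {Ω : Type*} [MeasurableSpace Ω] (P : Measure Ω)
    (X : Ω → ℝ) : ℝ :=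
  sInf {a | PhiMGF φ P X a}

/-- `max_{1 ≤ k ≤ m, 1 ≤ n ≤ j} X_{k,n}(ω)`. -/
noncomputable def runMax {Ω : Type*} (X : ℕ → ℕ → Ω → ℝ) (m j : ℕ) (ω : Ω) : ℝ :=
  sSup {y | ∃ k n, 1 ≤ k ∧ k ≤ m ∧ 1 ≤ n ∧ n ≤ j ∧ y = X k n ω}

/-- Convergence of a double array `b m j` to `l` as `m ∨ j → ∞`. -/
def TendstoMaxIdx (b : ℕ → ℕ → ℝ) (l : ℝ) : Prop :=
  ∀ ε > 0, ∃ N : ℕ, ∀ m j : ℕ, 1 ≤ m → 1 ≤ j → N ≤ max m j → |b m j - l| < ε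

/-!
On the event `Y⁻_{m,j} > ε` every `X_{k,n}` with `k ≤ m`, `n ≤ j` lies below
`g(ln(mj)) ψ⁻¹(ln(mj)) - ε`, and since `g(0) ≤ g(ln(kn)) ≤ g(ln(mj))` this threshold is at most
`x · g(ln(kn))` with `x = (g(ln(mj))/g(0)) ψ⁻¹(ln(mj)) - ε/g(ln(mj))`. By independence the event
has probability at most the product of the `mj` left-tail bounds `exp(-C e^{-κ(x)})`.
-/

theorem ProbabilityTheory.iIndepFun.measure_biInter_preimage_le_pow {Ω ι β : Type*}
    [MeasurableSpace Ω] [MeasurableSpace β] {P : Measure Ω} {X : ι → Ω → β}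
    (hX : iIndepFun X P) (F : Finset ι) {s : ι → Set β} (hs : ∀ i ∈ F, MeasurableSet (s i))
    {q : ENNReal} (hq : ∀ i ∈ F, P (X i ⁻¹' s i) ≤ q) :
    P (⋂ i ∈ F, X i ⁻¹' s i) ≤ q ^ F.card := by
  rw [hX.measure_inter_preimage_eq_mul F hs, ← Finset.prod_const]
  exact Finset.prod_le_prod' hq

theorem ENNReal.ofReal_exp_neg_pow (a : ℝ) (n : ℕ) :
    ENNReal.ofReal (exp (-a)) ^ n = ENNReal.ofReal (exp (-(n * a))) := by
  rw [← ENNReal.ofReal_pow (exp_nonneg _), ← exp_nat_mul, mul_neg]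

theorem le_runMax {Ω : Type*} (X : ℕ → ℕ → Ω → ℝ) {m j k n : ℕ} (hk : k ∈ Icc 1 m)
    (hn : n ∈ Icc 1 j) (ω : Ω) : X k n ω ≤ runMax X m j ω := by
  refine le_csSup (Set.Finite.bddAbove ?_) ⟨k, n, hk.1, hk.2, hn.1, hn.2, rfl⟩
  refine (((finite_Icc 1 m).prod (finite_Icc 1 j)).image fun p => X p.1 p.2 ω).subset ?_
  rintro _ ⟨k, n, hk1, hk2, hn1, hn2, rfl⟩
  exact ⟨(k, n), ⟨⟨hk1, hk2⟩, hn1, hn2⟩, rfl⟩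

theorem lt_sub_of_lt_max_sub_runMax {Ω : Type*} {X : ℕ → ℕ → Ω → ℝ} {m j k n : ℕ}
    (hk : k ∈ Icc 1 m) (hn : n ∈ Icc 1 j) {a ε : ℝ} (hε : 0 < ε) {ω : Ω}
    (h : ε < max (a - runMax X m j ω) 0) : X k n ω < a - ε := by
  have := le_runMax X hk hn ω
  rcases lt_max_iff.mp h with h | h <;> linarith

theorem log_natCast_mem_Icc {a b : ℕ} (ha : 1 ≤ a) (hab : a ≤ b) :
    log a ∈ Icc 0 (log b) :=
  ⟨log_nonneg (by exact_mod_cast ha),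
    log_le_log (by exact_mod_cast ha) (by exact_mod_cast hab)⟩

theorem sub_le_mul_of_le_of_le {a b c t ε : ℝ} (ha : 0 < a) (hab : a ≤ b) (hbc : b ≤ c)
    (ht : 0 ≤ t) (hε : 0 ≤ ε) : c * t - ε ≤ (c / a * t - ε / c) * b := by
  have hc : 0 < c := ha.trans_le (hab.trans hbc)
  have h₁ : c * t ≤ c / a * t * b := by
    rw [div_mul_eq_mul_div, div_mul_eq_mul_div, le_div_iff₀ ha]
    exact mul_le_mul_of_nonneg_left hab (mul_nonneg hc.le ht)
  have h₂ : ε / c * b ≤ ε := by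
    rw [div_mul_eq_mul_div, div_le_iff₀ hc]
    exact mul_le_mul_of_nonneg_left hbc hε
  linarith [sub_mul (c / a * t) (ε / c) b]

theorem prob_neg_part_le_general
    {Ω : Type*} [MeasurableSpace Ω] (P : Measure Ω)
    (ψ ψinv g : ℝ → ℝ)
    (hψinv : ∀ x, 0 ≤ x → 0 ≤ ψinv x ∧ ψ (ψinv x) = x)
    (hg_mono : MonotoneOn g (Set.Ici 0)) (hg_pos : ∀ x, 0 ≤ x → 0 < g x)
    (X : ℕ → ℕ → Ω → ℝ)
    (hindep : ProbabilityTheory.iIndepFun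
      (fun p : ℕ × ℕ => X p.1 p.2) P)
    (κ : ℝ → ℝ)
    (C : ℝ)
    (htail : ∀ k n : ℕ, 1 ≤ k → 1 ≤ n → ∀ x : ℝ, 0 < x →
      P {ω | X k n ω / g (Real.log ((k * n : ℕ) : ℝ)) < x}
        ≤ ENNReal.ofReal (Real.exp (-(C * Real.exp (-κ x))))) :
    ∀ ε : ℝ, 0 < ε → ∀ m j : ℕ, 1 ≤ m → 1 ≤ j →
      0 < g (Real.log ((m * j : ℕ) : ℝ)) / g 0 * ψinv (Real.log ((m * j : ℕ) : ℝ))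
          - ε / g (Real.log ((m * j : ℕ) : ℝ)) →
      P {ω | ε < max (g (Real.log ((m * j : ℕ) : ℝ)) * ψinv (Real.log ((m * j : ℕ) : ℝ))
            - runMax X m j ω) 0}
        ≤ ENNReal.ofReal (Real.exp (-(C * m * j *
            Real.exp (-κ (g (Real.log ((m * j : ℕ) : ℝ)) / g 0
              * ψinv (Real.log ((m * j : ℕ) : ℝ))
                - ε / g (Real.log ((m * j : ℕ) : ℝ))))))) := by
  intro ε hε m j hm hj hx
  set L := log ((m * j : ℕ) : ℝ)
  set x := g L / g 0 * ψinv L - ε / g L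
  set F := Finset.Icc 1 m ×ˢ Finset.Icc 1 j
  have hL0 : 0 ≤ L := log_nonneg (Nat.one_le_cast.mpr (Nat.mul_pos hm hj))
  have hg0_pos : 0 < g 0 := hg_pos 0 le_rfl
  have hF : ∀ p ∈ F, p.1 ∈ Icc 1 m ∧ p.2 ∈ Icc 1 j := fun p hp => by
    simpa only [F, Finset.mem_product, Finset.mem_Icc, Set.mem_Icc] using hp
  have hsub : {ω | ε < max (g L * ψinv L - runMax X m j ω) 0} ⊆
      ⋂ p ∈ F, (fun p : ℕ × ℕ => X p.1 p.2) p ⁻¹'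
        {y | y / g (log ((p.1 * p.2 : ℕ) : ℝ)) < x} := by
    intro ω hω
    simp only [mem_iInter]
    intro p hp
    obtain ⟨hk, hn⟩ := hF p hp
    obtain ⟨hkn0, hknL⟩ := log_natCast_mem_Icc (Nat.mul_pos hk.1 hn.1) (Nat.mul_le_mul hk.2 hn.2)
    have hg0 := hg_mono self_mem_Ici hkn0 hkn0
    have hgL := hg_mono hkn0 hL0 hknL
    rw [mem_preimage, mem_ofPred, div_lt_iff₀ (hg0_pos.trans_le hg0)]
    exact (lt_sub_of_lt_max_sub_runMax hk hn hε hω).trans_le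
      (sub_le_mul_of_le_of_le hg0_pos hg0 hgL (hψinv L hL0).1 hε.le)
  calc P {ω | ε < max (g L * ψinv L - runMax X m j ω) 0}
      ≤ P (⋂ p ∈ F, (fun p : ℕ × ℕ => X p.1 p.2) p ⁻¹'
          {y | y / g (log ((p.1 * p.2 : ℕ) : ℝ)) < x}) := measure_mono hsub
    _ ≤ ENNReal.ofReal (exp (-(C * exp (-κ x)))) ^ F.card :=
        hindep.measure_biInter_preimage_le_pow F
          (fun _ _ => measurableSet_lt (measurable_id.div_const _) measurable_const)
          (fun p hp => htail p.1 p.2 (hF p hp).1.1 (hF p hp).2.1 x hx)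
    _ = ENNReal.ofReal (exp (-(C * m * j * exp (-κ x)))) := by
        rw [ENNReal.ofReal_exp_neg_pow, Finset.card_product, Nat.card_Icc, Nat.card_Icc]
        push_cast
        ring_nf

/-- for an independent double array with left-tail bound
`P(X_{k,n}/g(ln(kn)) < x) ≤ exp(-C e^{-κ(x)})`, for every `ε > 0` and all `m, j ≥ 1` with
`(g(ln(mj))/g(0)) ψ⁻¹(ln(mj)) - ε/g(ln(mj)) > 0`, one gets
`P(Y⁻_{m,j} > ε) ≤ exp(-C m j exp(-κ((g(ln(mj))/g(0)) ψ⁻¹(ln(mj)) - ε/g(ln(mj)))))`. -/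
theorem prob_neg_part_le
    {Ω : Type*} [MeasurableSpace Ω] (P : Measure Ω) [IsProbabilityMeasure P]
    (φ ψ ψinv g : ℝ → ℝ) (hφ : IsOrliczN φ) (hψ : IsYoungFenchel φ ψ)
    (hψinv : ∀ x, 0 ≤ x → 0 ≤ ψinv x ∧ ψ (ψinv x) = x)
    (hg_mono : MonotoneOn g (Set.Ici 0)) (hg_pos : ∀ x, 0 ≤ x → 0 < g x)
    (X : ℕ → ℕ → Ω → ℝ)
    (hindep : ProbabilityTheory.iIndepFun
      (fun p : ℕ × ℕ => X p.1 p.2) P)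
    (κ : ℝ → ℝ) (hκ_pos : ∀ x, 0 < x → 0 < κ x) (hκ_mono : StrictMonoOn κ (Set.Ioi 0))
    (C : ℝ) (hC : 0 < C)
    (htail : ∀ k n : ℕ, 1 ≤ k → 1 ≤ n → ∀ x : ℝ, 0 < x →
      P {ω | X k n ω / g (Real.log ((k * n : ℕ) : ℝ)) < x}
        ≤ ENNReal.ofReal (Real.exp (-(C * Real.exp (-κ x))))) :
    ∀ ε : ℝ, 0 < ε → ∀ m j : ℕ, 1 ≤ m → 1 ≤ j →
      0 < g (Real.log ((m * j : ℕ) : ℝ)) / g 0 * ψinv (Real.log ((m * j : ℕ) : ℝ))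
          - ε / g (Real.log ((m * j : ℕ) : ℝ)) →
      P {ω | ε < max (g (Real.log ((m * j : ℕ) : ℝ)) * ψinv (Real.log ((m * j : ℕ) : ℝ))
            - runMax X m j ω) 0}
        ≤ ENNReal.ofReal (Real.exp (-(C * m * j *
            Real.exp (-κ (g (Real.log ((m * j : ℕ) : ℝ)) / g 0
              * ψinv (Real.log ((m * j : ℕ) : ℝ))
                - ε / g (Real.log ((m * j : ℕ) : ℝ))))))) :=
  prob_neg_part_le_general P ψ ψinv g hψinv hg_mono hg_pos X hindep κ C htail
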